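/- Define c_{110} by the power series expansion -½ ∑_{j=1}^{k-1} log(((1+x)^{1/k} - η^{-j}(1+y)^{1/k})/(1 - η^{-j})) = ∑_{m,n≥0} c_{mn0} x^m y^n. Then c_{110} = -(1/(2k²)) ∑_{j=1}^{k-1} η^{-j}/(1-η^{-j})² = (k²-1)/(24k²). -/

import Mathlib

/-!
Write `ζ = η⁻¹`. The mixed partial of `log ((u x - w u y) / (1 - w))` at the origin is
`w u'(0)² / (1 - w)²`, and `u = (1 + ·)^{1/k}` has `u'(0) = 1/k`.

Since `(1 - x)²` acts on coefficients as a second difference, and that of `i (k - i)` is constant,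
every `k`-th root of unity `ω ≠ 1` satisfies `ω / (1 - ω)² = (2k)⁻¹ ∑_{i<k} i (k - i) ωⁱ`.
Summing over `ω = ζʲ`, `1 ≤ j < k`, and using `∑_{1 ≤ j < k} ζ^{ij} = -1` for `0 < i < k` leaves
`-(2k)⁻¹ ∑_{i<k} i (k - i) = -(k² - 1)/12`.
-/

open Finset Filter Topology Complex

section RootsOfUnity

theorem six_mul_sum_range_mul_sub {R : Type*} [CommRing R] (K : R) (n : ℕ) :
    6 * ∑ i ∈ range n, (i : R) * (K - i) = n * (n - 1) * (3 * K - 2 * n + 1) := by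
  induction n with
  | zero => simp
  | succ n ih => rw [sum_range_succ, mul_add, ih]; push_cast; ring

theorem one_sub_sq_mul_sum_range_mul_sub_mul_pow {R : Type*} [CommRing R] (x K : R) (n : ℕ) :
    (1 - x) ^ 2 * ∑ i ∈ range n, (i : R) * (K - i) * x ^ i =
      ((1 - x) * (K + 1) - 2) * (∑ i ∈ range n, x ^ i - 1)
        + ((1 - x) * (n - 1 - K) + 2) * (n - 1) * x ^ n := by
  induction n with
  | zero => simp; ring
  | succ n ih => rw [sum_range_succ, mul_add, ih, sum_range_succ]; push_cast; ring

variable {K : Type*} [Field K]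

theorem div_one_sub_sq_eq_sum_range_of_pow_eq_one {x : K} {k : ℕ} (hk : 2 * (k : K) ≠ 0)
    (hxk : x ^ k = 1) (hx : x ≠ 1) :
    x / (1 - x) ^ 2 = (2 * (k : K))⁻¹ * ∑ i ∈ range k, (i : K) * (k - i) * x ^ i := by
  have hgeom : ∑ i ∈ range k, x ^ i = 0 := by rw [geom_sum_eq hx, hxk, sub_self, zero_div]
  have key := one_sub_sq_mul_sum_range_mul_sub_mul_pow x (k : K) k
  rw [hgeom, hxk] at key
  have hx' : (1 - x) ^ 2 ≠ 0 := pow_ne_zero 2 (sub_ne_zero.mpr hx.symm)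
  rw [eq_inv_mul_iff_mul_eq₀ hk, mul_div_assoc', div_eq_iff hx']
  linear_combination -key

theorem IsPrimitiveRoot.sum_Ico_pow_pow_eq_neg_one {ζ : K} {k i : ℕ} (hζ : IsPrimitiveRoot ζ k)
    (hi : i ≠ 0) (hik : i < k) : ∑ j ∈ Ico 1 k, (ζ ^ i) ^ j = -1 := by
  have hpow : (ζ ^ i) ^ k = 1 := by rw [pow_right_comm, hζ.pow_eq_one, one_pow]
  rw [sum_Ico_eq_sub _ (by omega : 1 ≤ k), geom_sum_eq (hζ.pow_ne_one_of_pos_of_lt hi hik), hpow]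
  simp

theorem IsPrimitiveRoot.sum_Ico_pow_div_one_sub_pow_sq [CharZero K] {ζ : K} {k : ℕ}
    (hζ : IsPrimitiveRoot ζ k) (hk : 0 < k) :
    ∑ j ∈ Ico 1 k, ζ ^ j / (1 - ζ ^ j) ^ 2 = -((k : K) ^ 2 - 1) / 12 := by
  have hk' : (k : K) ≠ 0 := Nat.cast_ne_zero.mpr hk.ne'
  calc ∑ j ∈ Ico 1 k, ζ ^ j / (1 - ζ ^ j) ^ 2
      = ∑ j ∈ Ico 1 k, (2 * (k : K))⁻¹ * ∑ i ∈ range k, (i : K) * (k - i) * (ζ ^ i) ^ j := by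
        refine sum_congr rfl fun j hj => ?_
        obtain ⟨hj1, hjk⟩ := mem_Ico.mp hj
        have hpow : (ζ ^ j) ^ k = 1 := by rw [pow_right_comm, hζ.pow_eq_one, one_pow]
        rw [div_one_sub_sq_eq_sum_range_of_pow_eq_one (mul_ne_zero two_ne_zero hk') hpow
          (hζ.pow_ne_one_of_pos_of_lt (Nat.one_le_iff_ne_zero.mp hj1) hjk)]
        simp_rw [pow_right_comm ζ j]
    _ = (2 * (k : K))⁻¹ * ∑ i ∈ range k, (i : K) * (k - i) * ∑ j ∈ Ico 1 k, (ζ ^ i) ^ j := by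
        rw [← mul_sum, sum_comm]
        simp_rw [mul_sum]
    _ = (2 * (k : K))⁻¹ * ∑ i ∈ range k, -((i : K) * (k - i)) := by
        refine congrArg _ (sum_congr rfl fun i hi => ?_)
        rcases eq_or_ne i 0 with rfl | hi0
        · simp
        · rw [hζ.sum_Ico_pow_pow_eq_neg_one hi0 (mem_range.mp hi), mul_neg_one]
    _ = -((k : K) ^ 2 - 1) / 12 := by
        have hsum := six_mul_sum_range_mul_sub (k : K) k
        rw [sum_neg_distrib]
        field_simp
        linear_combination (-2 : K) * hsum

end RootsOfUnity

section MixedPartial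

variable {u : ℂ → ℂ} {u' w : ℂ}

theorem hasDerivAt_one_add_cpow (c : ℂ) : HasDerivAt (fun t : ℂ => (1 + t) ^ c) c 0 := by
  simpa using ((hasDerivAt_id (0 : ℂ)).const_add 1).cpow_const (c := c) (by simp)

theorem eventually_sub_div_one_sub_mem_slitPlane (hu : ContinuousAt u 0) (hu0 : u 0 = 1)
    (hw : w ≠ 1) : ∀ᶠ x in 𝓝 0, (u x - w) / (1 - w) ∈ slitPlane := by
  have hc : ContinuousAt (fun x => (u x - w) / (1 - w)) 0 :=
    (hu.sub continuousAt_const).div_const _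
  refine hc.eventually_mem (isOpen_slitPlane.mem_nhds ?_)
  rw [hu0, div_self (sub_ne_zero.mpr hw.symm)]
  exact one_mem_slitPlane

theorem hasDerivAt_log_sub_mul_div_one_sub {x : ℂ} (hx : (u x - w) / (1 - w) ∈ slitPlane)
    (hu : HasDerivAt u u' 0) (hu0 : u 0 = 1) (hw : w ≠ 1) :
    HasDerivAt (fun y => log ((u x - w * u y) / (1 - w))) (-(w * u') / (u x - w)) 0 := by
  have hw' : 1 - w ≠ 0 := sub_ne_zero.mpr hw.symm
  have hv := ((hu.const_mul w).const_sub (u x)).div_const (1 - w)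
  have hmem : (u x - w * u 0) / (1 - w) ∈ slitPlane := by rwa [hu0, mul_one]
  refine (hv.clog hmem).congr_deriv ?_
  have hux : u x - w ≠ 0 := by
    rintro h
    simp [h] at hx
  rw [hu0, mul_one]
  field_simp

theorem hasDerivAt_neg_mul_div_sub (hu : HasDerivAt u u' 0) (hu0 : u 0 = 1) (hw : w ≠ 1) :
    HasDerivAt (fun x => -(w * u') / (u x - w)) (w * u' ^ 2 / (1 - w) ^ 2) 0 := by
  have hw' : u 0 - w ≠ 0 := by rw [hu0]; exact sub_ne_zero.mpr hw.symm
  refine ((hasDerivAt_const 0 (-(w * u'))).fun_div (hu.sub_const w) hw').congr_deriv ?_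
  rw [hu0]
  ring

theorem hasDerivAt_deriv_sum_log_sub_mul_div_one_sub {ι : Type*} (s : Finset ι) (w : ι → ℂ)
    (hw : ∀ j ∈ s, w j ≠ 1) (hu : HasDerivAt u u' 0) (hu0 : u 0 = 1) :
    HasDerivAt (fun x => deriv (fun y => ∑ j ∈ s, log ((u x - w j * u y) / (1 - w j))) 0)
      (u' ^ 2 * ∑ j ∈ s, w j / (1 - w j) ^ 2) 0 := by
  have hinner : (fun x => deriv (fun y => ∑ j ∈ s, log ((u x - w j * u y) / (1 - w j))) 0)
      =ᶠ[𝓝 0] fun x => ∑ j ∈ s, -(w j * u') / (u x - w j) := by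
    filter_upwards [(eventually_all_finset s).2 fun j hj =>
      eventually_sub_div_one_sub_mem_slitPlane hu.continuousAt hu0 (hw j hj)] with x hx
    exact (HasDerivAt.fun_sum fun j hj =>
      hasDerivAt_log_sub_mul_div_one_sub (hx j hj) hu hu0 (hw j hj)).deriv
  refine ((HasDerivAt.fun_sum fun j hj =>
    hasDerivAt_neg_mul_div_sub hu hu0 (hw j hj)).congr_of_eventuallyEq hinner).congr_deriv ?_
  rw [mul_sum]
  exact sum_congr rfl fun j _ => by ring

end MixedPartial

/-- The coefficient `c₁₁₀` of `xy` (equivalently, the mixed partial `∂²/∂x∂y` at `x = y = 0`)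
of `-½ ∑_{j=1}^{k-1} log(((1+x)^{1/k} - η^{-j}(1+y)^{1/k})/(1-η^{-j}))` equals
`-(1/(2k²)) ∑_{j=1}^{k-1} η^{-j}/(1-η^{-j})² = (k²-1)/(24k²)`. -/
theorem stmt16 (k : ℕ) (hk : 0 < k) (η : ℂ) (hη : IsPrimitiveRoot η k)
    (F : ℂ → ℂ → ℂ)
    (hF : ∀ x y, F x y = -(1 / 2) * ∑ j ∈ Finset.Ico 1 k,
        Complex.log (((1 + x) ^ ((k : ℂ)⁻¹) - η ^ (-(j : ℤ)) * (1 + y) ^ ((k : ℂ)⁻¹))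
          / (1 - η ^ (-(j : ℤ))))) :
    deriv (fun x => deriv (fun y => F x y) 0) 0
        = -(1 / (2 * (k : ℂ) ^ 2)) *
            ∑ j ∈ Finset.Ico 1 k, η ^ (-(j : ℤ)) / (1 - η ^ (-(j : ℤ))) ^ 2 ∧
    deriv (fun x => deriv (fun y => F x y) 0) 0
        = ((k : ℂ) ^ 2 - 1) / (24 * (k : ℂ) ^ 2) := by
  have hw : ∀ j ∈ Ico 1 k, η⁻¹ ^ j ≠ 1 := fun j hj =>
    hη.inv.pow_ne_one_of_pos_of_lt (Nat.one_le_iff_ne_zero.mp (mem_Ico.mp hj).1) (mem_Ico.mp hj).2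
  have hmixed : deriv (fun x => deriv (fun y => F x y) 0) 0
      = -(1 / 2) * ((k : ℂ)⁻¹ ^ 2 * ∑ j ∈ Ico 1 k, η⁻¹ ^ j / (1 - η⁻¹ ^ j) ^ 2) := by
    simp only [hF, zpow_neg, zpow_natCast, ← inv_pow, deriv_const_mul_field']
    rw [(hasDerivAt_deriv_sum_log_sub_mul_div_one_sub _ _ hw (hasDerivAt_one_add_cpow _)
      (by simp)).deriv]
  have hk' : (k : ℂ) ≠ 0 := Nat.cast_ne_zero.mpr hk.ne'
  simp only [hmixed, zpow_neg, zpow_natCast, ← inv_pow]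
  refine ⟨by ring, ?_⟩
  rw [hη.inv.sum_Ico_pow_div_one_sub_pow_sq hk]
  field_simp
  ring
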